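/- Let b ∈ (0,1), σ₀ ≠ 0, μ₀ ≠ 0, r ∈ ℝ, w₁ ∈ ℝ, and let Φ : ℝ² → ℝ be continuous. Suppose (θ, x) : I → ℝ² is twice continuously differentiable on an open interval I and satisfies, for all t ∈ I, the controlled equations θ̈ + b cos θ · ẍ − sin θ = 0 and b cos θ · θ̈ + ẍ − b sin θ · θ̇² = u, where u = (b + r·detg/(μ₀·detĝ))(cos θ sin θ − sin θ · θ̇²) − (w₁·detg/(σ₀·detĝ))(x − (μ₀/σ₀) sin θ) + detg · Φ(θ,x)(μ₀ cos θ · θ̇ − σ₀ ẋ), with detg = 1 − b² cos²θ and detĝ = b/(σ₀ μ₀) + (b r/μ₀) cos²θ + σ₀ r/μ₀², and assume detĝ evaluated along the solution never vanishes. Then for all t ∈ I, d/dt [ ½(ĝ₁₁ θ̇² + 2 ĝ₁₂ θ̇ ẋ + ĝ₂₂ ẋ²) + V̂(θ,x) ] = − detĝ · Φ(θ,x) · (μ₀ cos θ · θ̇ − σ₀ ẋ)², where ĝ₁₁ = 1/σ₀ + r cos²θ, ĝ₁₂ = −(σ₀/μ₀) r cos θ, ĝ₂₂ = b/μ₀ +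 σ₀² r/μ₀², and V̂(θ,x) = (1/σ₀)(cos θ − 1) + (w₁/2)(x − (μ₀/σ₀) sin θ)². -/

import Mathlib

/-!
Along a trajectory, `dĤ/dt = ĝ(q̇, q̈) + ½ (∂_θ ĝ)(q̇, q̇) θ̇ + dV̂(q̇)` is affine in the
accelerations `(θ̈, ẍ)`. The first equation of motion eliminates `θ̈`, and the
second then determines `ẍ` because `det g = 1 − b² cos² θ > 0`. The control law is built so
that, after this substitution, every term cancels except the damping term carried by `Φ`.
-/

noncomputable section

open Real Set

/-- `det g = 1 − b² cos²θ`. -/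
def detg (b θ : ℝ) : ℝ := 1 - b ^ 2 * Real.cos θ ^ 2

/-- `det ĝ = b/(σ₀ μ₀) + (b r/μ₀) cos²θ + σ₀ r/μ₀²`. -/
def detgh (b σ₀ μ₀ r θ : ℝ) : ℝ :=
  b / (σ₀ * μ₀) + (b * r / μ₀) * Real.cos θ ^ 2 + σ₀ * r / μ₀ ^ 2

/-- The nonlinear control law (17)–(18), as a function of the state
`(θ, x, θ', x')`. -/
def uctrl (b σ₀ μ₀ r w₁ : ℝ) (Φ : ℝ × ℝ → ℝ) (θ x θ' x' : ℝ) : ℝ :=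
  (b + r * detg b θ / (μ₀ * detgh b σ₀ μ₀ r θ)) *
      (Real.cos θ * Real.sin θ - Real.sin θ * θ' ^ 2)
    - (w₁ * detg b θ / (σ₀ * detgh b σ₀ μ₀ r θ)) * (x - (μ₀ / σ₀) * Real.sin θ)
    + detg b θ * Φ (θ, x) * (μ₀ * Real.cos θ * θ' - σ₀ * x')

theorem ContDiffOn.hasDerivAt_of_isOpen {𝕜 F : Type*} [NontriviallyNormedField 𝕜]
    [NormedAddCommGroup F] [NormedSpace 𝕜 F] {f : 𝕜 → F} {s : Set 𝕜} {n : WithTop ℕ∞}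
    (hf : ContDiffOn 𝕜 n f s) (hn : n ≠ 0) (hs : IsOpen s) {t : 𝕜} (ht : t ∈ s) :
    HasDerivAt f (deriv f t) t :=
  ((hf.contDiffAt (hs.mem_nhds ht)).differentiableAt hn).hasDerivAt

theorem detg_pos {b : ℝ} (hb : |b| < 1) (θ : ℝ) : 0 < detg b θ := by
  have hb2 : b ^ 2 < 1 := (sq_lt_one_iff_abs_lt_one b).2 hb
  unfold detg
  nlinarith [cos_sq_le_one θ, sq_nonneg b]

def hamiltonianHat (b σ₀ μ₀ r w₁ θ x θ' x' : ℝ) : ℝ :=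
  (1 / 2) * ((1 / σ₀ + r * cos θ ^ 2) * θ' ^ 2
      + 2 * (-(σ₀ / μ₀) * r * cos θ) * θ' * x'
      + (b / μ₀ + σ₀ ^ 2 * r / μ₀ ^ 2) * x' ^ 2)
    + ((1 / σ₀) * (cos θ - 1) + (w₁ / 2) * (x - (μ₀ / σ₀) * sin θ) ^ 2)

def hamiltonianHatRate (b σ₀ μ₀ r w₁ θ x θ' x' θ'' x'' : ℝ) : ℝ :=
  (1 / σ₀ + r * cos θ ^ 2) * θ' * θ'' - (σ₀ / μ₀) * r * cos θ * (θ'' * x' + θ' * x'')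
    + (b / μ₀ + σ₀ ^ 2 * r / μ₀ ^ 2) * x' * x''
    + (-r * cos θ * θ' ^ 2 + (σ₀ / μ₀) * r * θ' * x') * sin θ * θ'
    - (1 / σ₀) * sin θ * θ' + w₁ * (x - (μ₀ / σ₀) * sin θ) * (x' - (μ₀ / σ₀) * cos θ * θ')

theorem hasDerivAt_hamiltonianHat (b σ₀ μ₀ r w₁ : ℝ) {θ x θ' x' : ℝ → ℝ} {t : ℝ}
    (h₁ : HasDerivAt θ (θ' t) t) (h₂ : HasDerivAt x (x' t) t) {θ'' x'' : ℝ}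
    (h₃ : HasDerivAt θ' θ'' t) (h₄ : HasDerivAt x' x'' t) :
    HasDerivAt (fun s => hamiltonianHat b σ₀ μ₀ r w₁ (θ s) (x s) (θ' s) (x' s))
      (hamiltonianHatRate b σ₀ μ₀ r w₁ (θ t) (x t) (θ' t) (x' t) θ'' x'') t := by
  have hcos := (hasDerivAt_cos (θ t)).comp t h₁
  have hsin := (hasDerivAt_sin (θ t)).comp t h₁
  have h₁₁ := ((hcos.pow 2).const_mul r).const_add (1 / σ₀)
  have h₁₂ := hcos.const_mul (-(σ₀ / μ₀) * r)
  have hT := ((h₁₁.mul (h₃.pow 2)).add ((h₁₂.const_mul 2).mul h₃ |>.mul h₄)).add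
      ((h₄.pow 2).const_mul (b / μ₀ + σ₀ ^ 2 * r / μ₀ ^ 2)) |>.const_mul (1 / 2)
  have hV := ((hcos.sub_const 1).const_mul (1 / σ₀)).add
      (((h₂.sub (hsin.const_mul (μ₀ / σ₀))).pow 2).const_mul (w₁ / 2))
  refine (hT.add hV).congr_deriv ?_
  simp only [hamiltonianHatRate, Pi.pow_apply, Pi.mul_apply, Pi.sub_apply, Function.comp_apply]
  ring

theorem hamiltonianHatRate_eq (b σ₀ μ₀ r w₁ : ℝ) (Φ : ℝ × ℝ → ℝ) (hσ₀ : σ₀ ≠ 0) (hμ₀ : μ₀ ≠ 0)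
    {θ x θ' x' θ'' x'' : ℝ} (hg : detg b θ ≠ 0) (hĝ : detgh b σ₀ μ₀ r θ ≠ 0)
    (h₁ : θ'' + b * cos θ * x'' - sin θ = 0)
    (h₂ : b * cos θ * θ'' + x'' - b * sin θ * θ' ^ 2 = uctrl b σ₀ μ₀ r w₁ Φ θ x θ' x') :
    hamiltonianHatRate b σ₀ μ₀ r w₁ θ x θ' x' θ'' x''
      = -detgh b σ₀ μ₀ r θ * Φ (θ, x) * (μ₀ * cos θ * θ' - σ₀ * x') ^ 2 := by
  have hθ'' : θ'' = sin θ - b * cos θ * x'' := by linear_combination h₁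
  have hx'' : detg b θ * x''
      = uctrl b σ₀ μ₀ r w₁ Φ θ x θ' x' - b * cos θ * sin θ + b * sin θ * θ' ^ 2 := by
    unfold detg
    linear_combination h₂ - b * cos θ * h₁
  subst hθ''
  apply mul_left_cancel₀ hg
  unfold hamiltonianHatRate
  -- Once `θ''` is eliminated the rate is affine in `x''`, with slope `p_x − b cos θ · p_θ`
  -- for the controlled momentum `p = ĝ q̇`.
  linear_combination (norm := skip)
    ((-(σ₀ / μ₀) * r * cos θ * θ' + (b / μ₀ + σ₀ ^ 2 * r / μ₀ ^ 2) * x')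
      - b * cos θ * ((1 / σ₀ + r * cos θ ^ 2) * θ' - (σ₀ / μ₀) * r * cos θ * x')) * hx''
  unfold uctrl
  field_simp
  unfold detgh
  field_simp
  ring

theorem statement12 (b σ₀ μ₀ r w₁ : ℝ) (hb : b ∈ Ioo (0 : ℝ) 1)
    (hσ₀ : σ₀ ≠ 0) (hμ₀ : μ₀ ≠ 0)
    (Φ : ℝ × ℝ → ℝ)
    (a c : ℝ) (θ x : ℝ → ℝ)
    (hθ : ContDiffOn ℝ 2 θ (Ioo a c)) (hx : ContDiffOn ℝ 2 x (Ioo a c))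
    (heq1 : ∀ t ∈ Ioo a c,
      deriv (deriv θ) t + b * Real.cos (θ t) * deriv (deriv x) t
        - Real.sin (θ t) = 0)
    (heq2 : ∀ t ∈ Ioo a c,
      b * Real.cos (θ t) * deriv (deriv θ) t + deriv (deriv x) t
          - b * Real.sin (θ t) * (deriv θ t) ^ 2
        = uctrl b σ₀ μ₀ r w₁ Φ (θ t) (x t) (deriv θ t) (deriv x t))
    (hdet : ∀ t ∈ Ioo a c, detgh b σ₀ μ₀ r (θ t) ≠ 0) :
    ∀ t ∈ Ioo a c,
      deriv (fun s =>
        (1 / 2) * ((1 / σ₀ + r * Real.cos (θ s) ^ 2) * (deriv θ s) ^ 2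
            + 2 * (-(σ₀ / μ₀) * r * Real.cos (θ s)) * deriv θ s * deriv x s
            + (b / μ₀ + σ₀ ^ 2 * r / μ₀ ^ 2) * (deriv x s) ^ 2)
          + ((1 / σ₀) * (Real.cos (θ s) - 1)
            + (w₁ / 2) * (x s - (μ₀ / σ₀) * Real.sin (θ s)) ^ 2)) t
      = -detgh b σ₀ μ₀ r (θ t) * Φ (θ t, x t)
          * (μ₀ * Real.cos (θ t) * deriv θ t - σ₀ * deriv x t) ^ 2 := by
  intro t ht
  have hθ' : ContDiffOn ℝ 1 (deriv θ) (Ioo a c) := hθ.deriv_of_isOpen isOpen_Ioo (by norm_num)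
  have hx' : ContDiffOn ℝ 1 (deriv x) (Ioo a c) := hx.deriv_of_isOpen isOpen_Ioo (by norm_num)
  have hb' : |b| < 1 := abs_lt.2 ⟨by linarith [hb.1], hb.2⟩
  have hH := hasDerivAt_hamiltonianHat b σ₀ μ₀ r w₁
    (hθ.hasDerivAt_of_isOpen two_ne_zero isOpen_Ioo ht)
    (hx.hasDerivAt_of_isOpen two_ne_zero isOpen_Ioo ht)
    (hθ'.hasDerivAt_of_isOpen one_ne_zero isOpen_Ioo ht)
    (hx'.hasDerivAt_of_isOpen one_ne_zero isOpen_Ioo ht)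
  exact hH.deriv.trans <| hamiltonianHatRate_eq b σ₀ μ₀ r w₁ Φ hσ₀ hμ₀
    (detg_pos hb' _).ne' (hdet t ht) (heq1 t ht) (heq2 t ht)
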